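/- For every ε > 0 there exists a finite simple connected graph G such that mdim(G) / cdim(G) ≤ ε. Concretely, the path graph P_n on n vertices satisfies mdim(P_n) = 1 and cdim(P_n) = n − 1. -/

import Mathlib

open SimpleGraph

namespace ConnDim

open Classical in
/-- The local connectivity `κ(a,b)`: the maximum number of internally vertex-disjoint
`a`-`b` paths, with `κ(a,a) = ∞`. -/
noncomputable def localConn {V : Type*} (G : SimpleGraph V) (a b : V) : ℕ∞ :=
  if a = b then ⊤
  else sSup {n : ℕ∞ | ∃ Ps : Finset (G.Path a b),
    (∀ p ∈ Ps, ∀ q ∈ Ps, p ≠ q → ∀ x : V,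
        x ∈ p.1.support → x ∈ q.1.support → x = a ∨ x = b) ∧
    (Ps.card : ℕ∞) = n}

/-- A set `W` is connectivity resolving if vertices are determined by their
local connectivities to the elements of `W`. -/
def ConnResolving {V : Type*} (G : SimpleGraph V) (W : Set V) : Prop :=
  ∀ u v : V, (∀ w ∈ W, localConn G u w = localConn G v w) → u = v

/-- The connectivity dimension: minimum cardinality of a connectivity resolving set. -/
noncomputable def cdim {V : Type*} (G : SimpleGraph V) : ℕ :=
  sInf {n : ℕ | ∃ W : Set V, ConnResolving G W ∧ W.ncard = n}

/-- A set `W` is metric resolving if vertices are determined by their distances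
to the elements of `W`. -/
def MetricResolving {V : Type*} (G : SimpleGraph V) (W : Set V) : Prop :=
  ∀ u v : V, (∀ w ∈ W, G.dist u w = G.dist v w) → u = v

/-- The metric dimension: minimum cardinality of a metric resolving set. -/
noncomputable def mdim {V : Type*} (G : SimpleGraph V) : ℕ :=
  sInf {n : ℕ | ∃ W : Set V, MetricResolving G W ∧ W.ncard = n}

/-- `G` forces a `𝟙` representation if every minimum resolving set (basis) `B` admits a
vertex whose local connectivity to every element of `B` equals `1`. -/
def ForcesOne {V : Type*} (G : SimpleGraph V) : Prop :=
  ∀ B : Set V, ConnResolving G B → B.ncard = cdim G →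
    ∃ v : V, ∀ b ∈ B, localConn G v b = 1

/-- A cut vertex of a connected graph: its removal disconnects the graph. -/
def IsCutVertex {V : Type*} (G : SimpleGraph V) (v : V) : Prop :=
  G.Connected ∧ ¬ (G.induce {u : V | u ≠ v}).Connected

/-- A block of `G`: a maximal connected subgraph of `G` without a cut vertex of itself. -/
def IsBlock {V : Type*} (G : SimpleGraph V) (H : G.Subgraph) : Prop :=
  H.coe.Connected ∧ (∀ v, ¬ IsCutVertex H.coe v) ∧
  ∀ H' : G.Subgraph, H ≤ H' → H'.coe.Connected → (∀ v, ¬ IsCutVertex H'.coe v) → H' = H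

/-- The number of blocks of `G`. -/
noncomputable def numBlocks {V : Type*} (G : SimpleGraph V) : ℕ :=
  Nat.card {H : G.Subgraph // IsBlock G H}

/-- Two vertices are twins if they have the same neighborhood in the graph with
both of them deleted. -/
def AreTwins {V : Type*} (G : SimpleGraph V) (a b : V) : Prop :=
  ∀ x : V, x ≠ a → x ≠ b → (G.Adj a x ↔ G.Adj b x)

/-- The threshold graph generated by a binary sequence `L` (`false` = isolated vertex,
`true` = dominating vertex): two vertices are adjacent iff the later one was added
as a dominating vertex. -/
def thresholdGraph (L : List Bool) : SimpleGraph (Fin L.length) :=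
  SimpleGraph.fromRel (fun i j => i < j ∧ L.get j = true)

/-- The alternating binary sequence `0,1,0,1,…,0,1` of length `2 * n`. -/
def altList (n : ℕ) : List Bool := (List.replicate n [false, true]).flatten

/-- The join of two graphs on disjoint vertex sets by the bridge `v₁v₂`. -/
def bridgeJoin {V₁ V₂ : Type*} (G₁ : SimpleGraph V₁) (G₂ : SimpleGraph V₂)
    (v₁ : V₁) (v₂ : V₂) : SimpleGraph (V₁ ⊕ V₂) :=
  G₁.map Function.Embedding.inl ⊔ G₂.map Function.Embedding.inr
    ⊔ SimpleGraph.fromEdgeSet {s(Sum.inl v₁, Sum.inr v₂)}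

/-- The graph obtained from `G` by attaching a new leaf (the vertex `none`) to `u`. -/
def attachLeaf {V : Type*} (G : SimpleGraph V) (u : V) : SimpleGraph (Option V) :=
  G.map Function.Embedding.some ⊔ SimpleGraph.fromEdgeSet {s(some u, (none : Option V))}

/-- The chain of `t` triangles (triangle `i` has vertices `inl i.castSucc`, `inl i.succ`,
`inr (inl i)`), with a leaf `inr (inr ())` attached to the end vertex `inl 0`. -/
def triChain (t : ℕ) : SimpleGraph (Fin (t+1) ⊕ Fin t ⊕ Unit) :=
  SimpleGraph.fromRel (fun a b =>
    match a, b with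
    | Sum.inl i, Sum.inl j => (i : ℕ) + 1 = (j : ℕ)
    | Sum.inr (Sum.inl i), Sum.inl j => j = Fin.castSucc i ∨ j = Fin.succ i
    | Sum.inr (Sum.inr _), Sum.inl j => j = 0
    | _, _ => False)

/-!
`P_n` is a tree, so two distinct vertices are joined by exactly one path and `κ ≡ 1` off the
diagonal; a set then resolves iff it misses at most one vertex, whence `cdim P_n = n - 1`.
Distances to an end vertex are pairwise distinct, whence `mdim P_n = 1`.
-/

theorem localConn_self {V : Type*} (G : SimpleGraph V) (a : V) : localConn G a a = ⊤ :=
  if_pos rfl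

theorem localConn_eq_one_of_isTree {V : Type*} {G : SimpleGraph V} (hG : G.IsTree) {a b : V}
    (hab : a ≠ b) : localConn G a b = 1 := by
  classical
  rw [localConn, if_neg hab]
  apply le_antisymm
  · refine sSup_le ?_
    rintro _ ⟨Ps, -, rfl⟩
    exact_mod_cast Finset.card_le_one.mpr fun p _ q _ =>
      (hG.isAcyclic.subsingleton_path a b).elim p q
  · refine le_sSup ⟨{(hG.connected a b).some.toPath}, ?_, by simp⟩
    intro p _ q _ hpq
    exact (hpq ((hG.isAcyclic.subsingleton_path a b).elim p q)).elim

theorem connResolving_iff_subsingleton_compl {V : Type*} {G : SimpleGraph V} (hG : G.IsTree)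
    {W : Set V} : ConnResolving G W ↔ Wᶜ.Subsingleton := by
  refine ⟨fun hW u hu v hv => hW u v fun w hw => ?_, fun hW u v huv => ?_⟩
  · rw [localConn_eq_one_of_isTree hG (ne_of_mem_of_not_mem hw hu).symm,
      localConn_eq_one_of_isTree hG (ne_of_mem_of_not_mem hw hv).symm]
  · by_contra hne
    have separates : ∀ x y, x ≠ y → localConn G x x ≠ localConn G y x := fun x y hxy => by
      rw [localConn_self, localConn_eq_one_of_isTree hG hxy.symm]
      exact ENat.top_ne_one
    by_cases hu : u ∈ W
    · exact separates u v hne (huv u hu)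
    · have hv : v ∈ W := by_contra fun hv => hne (hW hu hv)
      exact separates v u (Ne.symm hne) (huv v hv).symm

theorem cdim_eq_of_isTree {V : Type*} [Finite V] {G : SimpleGraph V} (hG : G.IsTree) :
    cdim G = Nat.card V - 1 := by
  have hcard : ∀ W : Set V, W.ncard + Wᶜ.ncard = Nat.card V :=
    fun W => Set.ncard_add_ncard_compl W
  obtain ⟨v⟩ := hG.connected.nonempty
  have hmem : Nat.card V - 1 ∈ {n | ∃ W : Set V, ConnResolving G W ∧ W.ncard = n} := by
    refine ⟨{v}ᶜ, (connResolving_iff_subsingleton_compl hG).mpr (by simp), ?_⟩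
    have := hcard {v}ᶜ
    rw [compl_compl, Set.ncard_singleton] at this
    omega
  refine le_antisymm (Nat.sInf_le hmem) (le_csInf ⟨_, hmem⟩ ?_)
  rintro _ ⟨W, hW, rfl⟩
  have := Set.ncard_le_one_iff_subsingleton.mpr ((connResolving_iff_subsingleton_compl hG).mp hW)
  have := hcard W
  omega

theorem not_metricResolving_empty {V : Type*} [Nontrivial V] (G : SimpleGraph V) :
    ¬ MetricResolving G ∅ := fun h =>
  let ⟨u, v, huv⟩ := exists_pair_ne V
  huv (h u v (by simp))

theorem mdim_eq_one_of_metricResolving_singleton {V : Type*} [Finite V] [Nontrivial V]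
    {G : SimpleGraph V} {w : V} (hw : MetricResolving G {w}) : mdim G = 1 := by
  have hmem : 1 ∈ {n | ∃ W : Set V, MetricResolving G W ∧ W.ncard = n} :=
    ⟨{w}, hw, Set.ncard_singleton w⟩
  refine le_antisymm (Nat.sInf_le hmem) (Nat.one_le_iff_ne_zero.mpr fun h0 => ?_)
  have hmin : mdim G ∈ {n | ∃ W : Set V, MetricResolving G W ∧ W.ncard = n} :=
    Nat.sInf_mem ⟨1, hmem⟩
  obtain ⟨W, hW, hcard⟩ := h0 ▸ hmin
  rw [Set.ncard_eq_zero] at hcard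
  exact not_metricResolving_empty G (hcard ▸ hW)

theorem pathGraph_isAcyclic (n : ℕ) : (pathGraph n).IsAcyclic := by
  rw [isAcyclic_iff_forall_adj_isBridge]
  intro u v huv
  wlog h : u.val + 1 = v.val generalizing u v
  · rw [Sym2.eq_swap]
    exact this huv.symm ((pathGraph_adj.mp huv).resolve_left h)
  rw [isBridge_iff]
  rintro ⟨p⟩
  -- `uv` is the only edge leaving `{x | x ≤ u}`
  obtain ⟨d, -, hdu, hdv⟩ := p.exists_boundary_dart {x : Fin n | x ≤ u} (le_refl u)
    (show ¬ v ≤ u by rw [Fin.le_def]; omega)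
  obtain ⟨hadj, hne⟩ := deleteEdges_adj.mp d.adj
  simp only [Set.mem_ofPred_eq, Fin.le_def, not_le] at hdu hdv
  rw [pathGraph_adj] at hadj
  have hfst : d.fst = u := Fin.ext (by omega)
  have hsnd : d.snd = v := Fin.ext (by omega)
  exact hne (by simp [hfst, hsnd])

theorem pathGraph_isTree (n : ℕ) : (pathGraph (n + 1)).IsTree :=
  ⟨pathGraph_connected n, pathGraph_isAcyclic _⟩

theorem pathGraph_val_le_val_add_length {n : ℕ} {u v : Fin n} (p : (pathGraph n).Walk u v) :
    (u : ℕ) ≤ v + p.length := by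
  induction p with
  | nil => simp
  | cons h _ ih =>
    rw [pathGraph_adj] at h
    simp only [Walk.length_cons]
    omega

theorem pathGraph_dist_zero {n : ℕ} (u : Fin (n + 1)) : (pathGraph (n + 1)).dist u 0 = u := by
  apply le_antisymm
  · induction u using Fin.induction with
    | zero => simp
    | succ i ih =>
      have hadj : (pathGraph (n + 1)).Adj i.succ i.castSucc := by simp [pathGraph_adj]
      calc (pathGraph (n + 1)).dist i.succ 0
          ≤ (pathGraph (n + 1)).dist i.succ i.castSucc + (pathGraph (n + 1)).dist i.castSucc 0 :=
            (pathGraph_connected n).dist_triangle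
        _ ≤ 1 + i := add_le_add (by simpa using dist_le hadj.toWalk) (by simpa using ih)
        _ = i.succ := by simp [add_comm]
  · obtain ⟨p, hp⟩ := (pathGraph_connected n).exists_walk_length_eq_dist u 0
    simpa [hp] using pathGraph_val_le_val_add_length p

theorem metricResolving_pathGraph_zero (n : ℕ) : MetricResolving (pathGraph (n + 1)) {0} :=
  fun u v h => Fin.ext <| by simpa [pathGraph_dist_zero] using h 0 rfl

/-- for every `ε > 0` there is a connected graph `G` with
`mdim G / cdim G ≤ ε`; concretely the path graph `P_n` has metric dimension `1` and
connectivity dimension `n - 1`. -/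
theorem stmt9 :
    (∀ n : ℕ, 2 ≤ n →
      mdim (pathGraph n) = 1 ∧ cdim (pathGraph n) = n - 1) ∧
    (∀ ε : ℝ, 0 < ε → ∃ n : ℕ, 2 ≤ n ∧ (pathGraph n).Connected ∧
      (mdim (pathGraph n) : ℝ) / (cdim (pathGraph n) : ℝ) ≤ ε) := by
  have dims : ∀ m : ℕ, mdim (pathGraph (m + 2)) = 1 ∧ cdim (pathGraph (m + 2)) = m + 1 :=
    fun m => ⟨mdim_eq_one_of_metricResolving_singleton (metricResolving_pathGraph_zero _),
      by simpa using cdim_eq_of_isTree (pathGraph_isTree (m + 1))⟩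
  refine ⟨fun n hn => ?_, fun ε hε => ?_⟩
  · obtain ⟨m, rfl⟩ := Nat.exists_eq_add_of_le' hn
    simpa using dims m
  · refine ⟨⌈ε⁻¹⌉₊ + 2, by omega, pathGraph_connected _, ?_⟩
    rw [(dims _).1, (dims _).2, Nat.cast_one, one_div, Nat.cast_add_one]
    exact inv_le_of_inv_le₀ hε ((Nat.le_ceil _).trans (by linarith))

end ConnDim
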